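/- arXiv:2509.05257 — 2 statements merged into one kernel-verified Lean document; each statement's English description precedes it below -/
import Mathlib

section
/- For positive semidefinite ρ, σ, one has ker(ρ^{-1} # σ) ⊆ ker(ρ^{-1/2} P ρ P ρ^{-1/2}), where P is the orthogonal projection onto Image(ρ^{1/2} σ ρ^{1/2}) and ρ^{-1} # σ = ρ^{-1/2}(ρ^{1/2} σ ρ^{1/2})^{1/2} ρ^{-1/2} with pseudoinverses. -/
open Matrix Kronecker
open scoped ComplexOrder

noncomputable section
attribute [local instance] Classical.propDecidable

/-- Moore–Penrose pseudoinverse of a square complex matrix. -/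
def pinv {n : Type*} [Fintype n] [DecidableEq n] (A : Matrix n n ℂ) : Matrix n n ℂ :=
  if h : ∃ B : Matrix n n ℂ,
      A * B * A = A ∧ B * A * B = B ∧ (A * B)ᴴ = A * B ∧ (B * A)ᴴ = B * A
  then h.choose else 0

/-- Positive semidefinite square root (junk value `0` if the matrix is not PSD). -/
def msqrt {n : Type*} [Fintype n] [DecidableEq n] (A : Matrix n n ℂ) : Matrix n n ℂ :=
  if h : A.PosSemidef then
    (h.1.eigenvectorUnitary : Matrix n n ℂ) * diagonal ((↑) ∘ (h.1.eigenvalues · |>.sqrt))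
      * (star h.1.eigenvectorUnitary : Matrix n n ℂ)
  else 0

/-- `sgn(X) = U sgn(Σ) V*` for an SVD `X = U Σ V*`; equivalently `X (X* X)^{-1/2}`
with the Moore–Penrose pseudoinverse. -/
def msgn {n : Type*} [Fintype n] [DecidableEq n] (X : Matrix n n ℂ) : Matrix n n ℂ :=
  X * pinv (msqrt (Xᴴ * X))

/-- Matrix geometric mean `A # B = A^{1/2} (A^{-1/2} B A^{-1/2})^{1/2} A^{1/2}`
(with Moore–Penrose pseudoinverses). -/
def geo {n : Type*} [Fintype n] [DecidableEq n] (A B : Matrix n n ℂ) : Matrix n n ℂ :=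
  msqrt A * msqrt (pinv (msqrt A) * B * pinv (msqrt A)) * msqrt A

/-- The unnormalized maximally entangled state `|Ω⟩ = ∑ i, |i⟩ ⊗ |i⟩`. -/
def omegaVec (d : ℕ) : Fin d × Fin d → ℂ := fun p => if p.1 = p.2 then 1 else 0

/-- Reduced density matrix of `|C⟩⟨C|` on the first subsystem
(partial trace over the second subsystem). -/
def reducedA {d : ℕ} (C : Fin d × Fin d → ℂ) : Matrix (Fin d) (Fin d) ℂ :=
  Matrix.of fun i j => ∑ k, C (i, k) * star (C (j, k))

/-- Partial trace over the first subsystem of the operator `|D⟩⟨C|`. -/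
def trA {d : ℕ} (D C : Fin d × Fin d → ℂ) : Matrix (Fin d) (Fin d) ℂ :=
  Matrix.of fun j l => ∑ i, D (i, j) * star (C (i, l))

/-- `ℓ²→ℓ²` operator norm (largest singular value). -/
def opNorm {n : Type*} [Fintype n] [DecidableEq n] (A : Matrix n n ℂ) : ℝ :=
  ‖(Matrix.toEuclideanCLM (𝕜 := ℂ) A : EuclideanSpace ℂ n →L[ℂ] EuclideanSpace ℂ n)‖

/-- `P` is the orthogonal projection onto the image (column space) of `A`. -/
def IsOrthProjOnto {n : Type*} [Fintype n] [DecidableEq n] (P A : Matrix n n ℂ) : Prop :=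
  Pᴴ = P ∧ P * P = P ∧ LinearMap.range P.mulVecLin = LinearMap.range A.mulVecLin

/-- `η` is the smallest nonzero eigenvalue of the Hermitian matrix `M`. -/
def IsSmallestNonzeroEigenvalue {n : Type*} [Fintype n] [DecidableEq n]
    (M : Matrix n n ℂ) (η : ℝ) : Prop :=
  ∃ hM : M.IsHermitian, η ≠ 0 ∧ (∃ i, hM.eigenvalues i = η) ∧
    ∀ i, hM.eigenvalues i ≠ 0 → η ≤ hM.eigenvalues i

/-!
Write `T = ρ^{-1/2}` and `M = ρ^{1/2} σ ρ^{1/2}`. Pseudoinverses and square roots of Hermitian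
matrices are given by the continuous functional calculus (the pseudoinverse of `f(A)` is `(1/f)(A)`,
with `1/0 = 0`), so `ρ^{-1} # σ = T M^{1/2} T`.
If `T M^{1/2} T x = 0`, then `y = T x` satisfies `⟨y, M^{1/2} y⟩ = 0`, hence `M^{1/2} y = 0`
and `M y = 0`. Thus `y ⊥ range M = range P`, so `P y = 0`, and `T P ρ P T x = 0`.
-/

namespace Matrix

variable {n : Type*} [Fintype n]

def IsMoorePenroseInverse (A B : Matrix n n ℂ) : Prop :=
  A * B * A = A ∧ B * A * B = B ∧ (A * B)ᴴ = A * B ∧ (B * A)ᴴ = B * A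

namespace IsMoorePenroseInverse

variable {A B C : Matrix n n ℂ}

theorem unique (hB : IsMoorePenroseInverse A B) (hC : IsMoorePenroseInverse A C) : B = C := by
  obtain ⟨b1, b2, b3, b4⟩ := hB
  obtain ⟨c1, c2, c3, c4⟩ := hC
  have hAB : A * B = A * C :=
    calc A * B = (A * C * A) * B := by rw [c1]
      _ = (A * C)ᴴ * (A * B)ᴴ := by rw [c3, b3, mul_assoc]
      _ = (A * B * A * C)ᴴ := by rw [← conjTranspose_mul]; simp only [mul_assoc]
      _ = A * C := by rw [b1, c3]
  have hBA : B * A = C * A :=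
    calc B * A = B * (A * C * A) := by rw [c1]
      _ = (B * A)ᴴ * (C * A)ᴴ := by rw [b4, c4]; simp only [mul_assoc]
      _ = (C * (A * B * A))ᴴ := by rw [← conjTranspose_mul]; simp only [mul_assoc]
      _ = C * A := by rw [b1, c4]
  calc B = B * A * B := b2.symm
    _ = C * A * C := by rw [hBA, mul_assoc, hAB, ← mul_assoc]
    _ = C := c2

end IsMoorePenroseInverse

theorem PosSemidef.mulVec_mulVec_eq_zero_of_conj {B T : Matrix n n ℂ} (hB : B.PosSemidef)
    (hT : T.IsHermitian) {x : n → ℂ} (hx : (T * B * T) *ᵥ x = 0) : B *ᵥ (T *ᵥ x) = 0 := by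
  refine (hB.dotProduct_mulVec_zero_iff _).mp ?_
  rw [star_mulVec, hT.eq, ← dotProduct_mulVec, mulVec_mulVec, mulVec_mulVec, hx, dotProduct_zero]

variable [DecidableEq n]

theorem pinv_eq_of_isMoorePenroseInverse {A B : Matrix n n ℂ} (h : IsMoorePenroseInverse A B) :
    pinv A = B := by
  have hex : ∃ C, IsMoorePenroseInverse A C := ⟨B, h⟩
  exact (dif_pos hex).trans (hex.choose_spec.unique h)

theorem isMoorePenroseInverse_cfc_inv (A : Matrix n n ℂ) (f : ℝ → ℝ) :
    IsMoorePenroseInverse (cfc f A) (cfc (fun x => (f x)⁻¹) A) := by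
  have hmul (g h : ℝ → ℝ) : cfc g A * cfc h A = cfc (fun x => g x * h x) A :=
    (cfc_mul g h A (A.finite_real_spectrum.continuousOn g)
      (A.finite_real_spectrum.continuousOn h)).symm
  refine ⟨?_, ?_, ?_, ?_⟩ <;> simp only [hmul]
  · simp only [mul_inv_mul_cancel]
  · congr! 2 with x
    simpa only [inv_inv] using mul_inv_mul_cancel (f x)⁻¹
  all_goals exact IsSelfAdjoint.cfc.isHermitian

theorem pinv_cfc (A : Matrix n n ℂ) (f : ℝ → ℝ) : pinv (cfc f A) = cfc (fun x => (f x)⁻¹) A :=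
  pinv_eq_of_isMoorePenroseInverse (isMoorePenroseInverse_cfc_inv A f)

namespace IsHermitian

variable {A : Matrix n n ℂ}

theorem pinv_eq_cfc_inv (hA : A.IsHermitian) : pinv A = cfc (·⁻¹ : ℝ → ℝ) A := by
  conv_lhs => rw [← cfc_id' ℝ A hA.isSelfAdjoint]
  exact pinv_cfc A _

theorem pinv_pinv (hA : A.IsHermitian) : pinv (pinv A) = A := by
  rw [hA.pinv_eq_cfc_inv, pinv_cfc]
  simp only [inv_inv]
  exact cfc_id' ℝ A hA.isSelfAdjoint

theorem isHermitian_pinv (hA : A.IsHermitian) : (pinv A).IsHermitian := by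
  rw [hA.pinv_eq_cfc_inv]
  exact IsSelfAdjoint.cfc.isHermitian

end IsHermitian

namespace PosSemidef

open scoped MatrixOrder

variable {A : Matrix n n ℂ}

theorem msqrt_eq_cfc_sqrt (hA : A.PosSemidef) : msqrt A = cfc Real.sqrt A := by
  rw [msqrt, dif_pos hA, hA.1.cfc_eq, IsHermitian.cfc, Unitary.conjStarAlgAut_apply]
  rfl

theorem msqrt_eq_sqrt (hA : A.PosSemidef) : msqrt A = CFC.sqrt A := by
  rw [hA.msqrt_eq_cfc_sqrt, CFC.sqrt_eq_real_sqrt A hA.nonneg, cfcₙ_eq_cfc]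

theorem posSemidef_msqrt (hA : A.PosSemidef) : (msqrt A).PosSemidef := by
  rw [hA.msqrt_eq_sqrt]
  exact (CFC.sqrt_nonneg A).posSemidef

theorem msqrt_mul_msqrt (hA : A.PosSemidef) : msqrt A * msqrt A = A := by
  rw [hA.msqrt_eq_sqrt]
  exact CFC.sqrt_mul_sqrt_self A hA.nonneg

theorem posSemidef_pinv (hA : A.PosSemidef) : (pinv A).PosSemidef := by
  rw [hA.1.pinv_eq_cfc_inv]
  exact (cfc_nonneg fun x hx => inv_nonneg.2 (spectrum_nonneg_of_nonneg hA.nonneg hx)).posSemidef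

theorem pinv_msqrt (hA : A.PosSemidef) : pinv (msqrt A) = cfc (fun x => (√x)⁻¹) A := by
  rw [hA.msqrt_eq_cfc_sqrt, pinv_cfc]

theorem msqrt_pinv (hA : A.PosSemidef) : msqrt (pinv A) = pinv (msqrt A) := by
  rw [hA.posSemidef_pinv.msqrt_eq_cfc_sqrt, hA.1.pinv_eq_cfc_inv,
    ← cfc_comp' _ _ A ((A.finite_real_spectrum.image _).continuousOn _)
      (A.finite_real_spectrum.continuousOn _), hA.pinv_msqrt]
  simp only [Real.sqrt_inv]

theorem geo_pinv (hA : A.PosSemidef) (B : Matrix n n ℂ) :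
    geo (pinv A) B = pinv (msqrt A) * msqrt (msqrt A * B * msqrt A) * pinv (msqrt A) := by
  rw [geo, hA.msqrt_pinv, hA.posSemidef_msqrt.1.pinv_pinv]

theorem mulVec_eq_zero_of_msqrt_mulVec_eq_zero (hA : A.PosSemidef) {x : n → ℂ}
    (hx : msqrt A *ᵥ x = 0) : A *ᵥ x = 0 := by
  rw [← hA.msqrt_mul_msqrt, ← mulVec_mulVec, hx, mulVec_zero]

end PosSemidef

-- `ker A = (range A)ᗮ` for Hermitian `A`, and `P` vanishes on `(range P)ᗮ`.
theorem IsOrthProjOnto.mulVec_eq_zero {P A : Matrix n n ℂ} (hP : IsOrthProjOnto P A)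
    (hA : A.IsHermitian) {y : n → ℂ} (hy : A *ᵥ y = 0) : P *ᵥ y = 0 := by
  obtain ⟨hPh, hPP, hPA⟩ := hP
  obtain ⟨u, hu⟩ : P *ᵥ y ∈ LinearMap.range A.mulVecLin := hPA ▸ LinearMap.mem_range_self _ y
  rw [mulVecLin_apply] at hu
  refine dotProduct_star_self_eq_zero.mp ?_
  calc star (P *ᵥ y) ⬝ᵥ (P *ᵥ y) = star y ⬝ᵥ ((P * P) *ᵥ y) := by
        rw [star_mulVec, hPh, ← dotProduct_mulVec, mulVec_mulVec]
    _ = star (A *ᵥ y) ⬝ᵥ u := by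
        rw [hPP, ← hu, dotProduct_mulVec, star_mulVec, hA.eq]
    _ = 0 := by rw [hy, star_zero, zero_dotProduct]

end Matrix

theorem ker_geo_mean_subset {n : Type*} [Fintype n] [DecidableEq n]
    (ρ σ P : Matrix n n ℂ) (hρ : ρ.PosSemidef) (hσ : σ.PosSemidef)
    (hP : IsOrthProjOnto P (msqrt ρ * σ * msqrt ρ)) :
    LinearMap.ker (geo (pinv ρ) σ).mulVecLin ≤
      LinearMap.ker (pinv (msqrt ρ) * P * ρ * P * pinv (msqrt ρ)).mulVecLin := by
  intro x hx
  rw [LinearMap.mem_ker, mulVecLin_apply, hρ.geo_pinv] at hx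
  have hS := hρ.posSemidef_msqrt
  have hM : (msqrt ρ * σ * msqrt ρ).PosSemidef := by
    simpa only [hS.1.eq] using hσ.mul_mul_conjTranspose_same (msqrt ρ)
  have hMy : (msqrt ρ * σ * msqrt ρ) *ᵥ (pinv (msqrt ρ) *ᵥ x) = 0 :=
    hM.mulVec_eq_zero_of_msqrt_mulVec_eq_zero
      (hM.posSemidef_msqrt.mulVec_mulVec_eq_zero_of_conj hS.1.isHermitian_pinv hx)
  have hPy : P *ᵥ (pinv (msqrt ρ) *ᵥ x) = 0 := hP.mulVec_eq_zero hM.1 hMy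
  rw [LinearMap.mem_ker, mulVecLin_apply]
  simp only [← mulVec_mulVec, hPy, mulVec_zero]
end
end

section
/- Suppose A is positive definite, B and X are positive semidefinite, the block matrix [[A, X], [X, B]] is positive semidefinite, and Π is a projection commuting with X. Then A^{1/2}(A^{-1/2} Π B Π A^{-1/2})^{1/2} A^{1/2} ≥ Π X Π in the Loewner order. -/
open Matrix Kronecker
open scoped ComplexOrder

noncomputable section
attribute [local instance] Classical.propDecidable

/-!
Write `S = A^{1/2}`. The Schur complement criterion turns the block condition into
`X A⁻¹ X ≤ B`, and compressing by `Π` (which commutes with `X`) gives `Y A⁻¹ Y ≤ Π B Π` for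
`Y = Π X Π`. Conjugating by `S⁻¹`, the Hermitian matrix `D = S⁻¹ Y S⁻¹` satisfies
`D² ≤ S⁻¹ Π B Π S⁻¹`, so operator monotonicity of the square root yields
`D ≤ |D| = (D²)^{1/2} ≤ (S⁻¹ Π B Π S⁻¹)^{1/2}`; conjugating back by `S` gives the claim.
-/

open scoped Ring

lemma IsStarProjection.mul_mul_mul_le_of_commute {R : Type*} [Semiring R] [PartialOrder R]
    [StarRing R] [StarOrderedRing R] {p x m b : R} (hp : IsStarProjection p)
    (hpx : Commute p x) (h : x * m * x ≤ b) :
    p * x * p * m * (p * x * p) ≤ p * b * p := by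
  have hpxp : p * x * p = p * x := by
    rw [mul_assoc, ← hpx.eq, ← mul_assoc, hp.isIdempotentElem.eq]
  have hconj : p * (x * m * x) * p = p * x * p * m * (p * x * p) :=
    calc p * (x * m * x) * p = p * x * m * (x * p) := by simp only [mul_assoc]
      _ = p * x * p * m * (p * x * p) := by rw [hpxp, hpx.eq]
  simpa only [hp.isSelfAdjoint.star_eq, hconj] using star_left_conjugate_le_conjugate h p

namespace CFC

variable {𝒜 : Type*} [CStarAlgebra 𝒜] [PartialOrder 𝒜] [StarOrderedRing 𝒜]

lemma le_abs_self (a : 𝒜) (ha : IsSelfAdjoint a := by cfc_tac) : a ≤ abs a := by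
  rw [← sub_nonneg, abs_sub_self a ha]
  exact smul_nonneg zero_le_two (negPart_nonneg a)

lemma le_sqrt_of_mul_self_le {a b : 𝒜} (ha : IsSelfAdjoint a) (h : a * a ≤ b) :
    a ≤ sqrt b :=
  calc a ≤ abs a := le_abs_self a ha
    _ = sqrt (a * a) := by rw [abs, ha.star_eq]
    _ ≤ sqrt b := sqrt_le_sqrt _ _ h

lemma le_sqrt_mul_sqrt_conj_mul_sqrt {a c y : 𝒜} (ha : IsStrictlyPositive a)
    (hy : IsSelfAdjoint y) (h : y * a⁻¹ʳ * y ≤ c) :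
    y ≤ sqrt a * sqrt ((sqrt a)⁻¹ʳ * c * (sqrt a)⁻¹ʳ) * sqrt a := by
  set s := sqrt a
  set r := s⁻¹ʳ
  have hs : IsUnit s := ha.isUnit_cfcSqrt
  have hsr : s * r = 1 := Ring.mul_inverse_cancel s hs
  have hrs : r * s = 1 := Ring.inverse_mul_cancel s hs
  have hss : star s = s := (sqrt_nonneg a).isSelfAdjoint.star_eq
  have hr : star r = r := (sqrt_nonneg a).isSelfAdjoint.ringInverse.star_eq
  have ha_inv : a⁻¹ʳ = r * r := by
    rw [← sqrt_mul_sqrt_self a ha.nonneg, Ring.mul_inverse_rev' (Commute.refl s)]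
  set d := r * y * r
  have hd : IsSelfAdjoint d := by simpa only [hr] using hy.conjugate' r
  have hdd : d * d ≤ r * c * r := by
    simpa only [hr, ha_inv, d, mul_assoc] using star_left_conjugate_le_conjugate h r
  calc y = s * d * s := by
        simp only [d, ← mul_assoc, hsr, one_mul]
        rw [mul_assoc y, hrs, mul_one]
    _ ≤ s * sqrt (r * c * r) * s := by
        simpa only [hss] using star_left_conjugate_le_conjugate (le_sqrt_of_mul_self_le hd hdd) s

end CFC

section

variable {n : Type*} [Fintype n] [DecidableEq n]

open scoped Matrix.Norms.L2Operator MatrixOrder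

lemma msqrt_eq_cfcSqrt (A : Matrix n n ℂ) : msqrt A = CFC.sqrt A := by
  by_cases h : A.PosSemidef
  · rw [CFC.sqrt_eq_real_sqrt A h.nonneg, cfcₙ_eq_cfc, h.1.cfc_eq, msqrt, dif_pos h]
    rfl
  · rw [msqrt, dif_neg h, CFC.sqrt_of_not_nonneg (by rwa [nonneg_iff_posSemidef])]

lemma pinv_eq_inv {A : Matrix n n ℂ} (hA : IsUnit A) : pinv A = A⁻¹ := by
  have : Invertible A := hA.invertible
  have hex : ∃ B : Matrix n n ℂ,
      A * B * A = A ∧ B * A * B = B ∧ (A * B)ᴴ = A * B ∧ (B * A)ᴴ = B * A :=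
    ⟨A⁻¹, by simp⟩
  rw [pinv, dif_pos hex]
  exact (inv_eq_right_inv (hA.mul_eq_right.mp hex.choose_spec.1)).symm

lemma le_geo_of_mul_inv_mul_le {A C Y : Matrix n n ℂ} (hA : A.PosDef) (hY : Y.IsHermitian)
    (h : Y * A⁻¹ * Y ≤ C) : Y ≤ geo A C := by
  have hS : IsUnit (CFC.sqrt A) := hA.isStrictlyPositive.isUnit_cfcSqrt
  rw [nonsing_inv_eq_ringInverse] at h
  rw [geo, msqrt_eq_cfcSqrt, msqrt_eq_cfcSqrt, pinv_eq_inv hS, nonsing_inv_eq_ringInverse]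
  exact CFC.le_sqrt_mul_sqrt_conj_mul_sqrt hA.isStrictlyPositive hY h

lemma mul_inv_mul_le_of_posSemidef_fromBlocks {A B X : Matrix n n ℂ} (hA : A.PosDef)
    (hM : (fromBlocks A X X B).PosSemidef) : X * A⁻¹ * X ≤ B := by
  have hX : Xᴴ = X := (isHermitian_fromBlocks_iff.mp hM.1).2.1
  have : Invertible A := hA.isUnit.invertible
  have := (hA.fromBlocks₁₁ X B).mp (by rwa [hX])
  rwa [hX, ← le_iff] at this

end

theorem schur_projection_bound_general {n : Type*} [Fintype n] [DecidableEq n]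
    (A B X p : Matrix n n ℂ) (hA : A.PosDef)
    (hM : (Matrix.fromBlocks A X X B).PosSemidef)
    (hp1 : pᴴ = p) (hp2 : p * p = p) (hcomm : p * X = X * p) :
    (msqrt A * msqrt (pinv (msqrt A) * (p * B * p) * pinv (msqrt A)) * msqrt A
      - p * X * p).PosSemidef := by
  have hX : X.IsHermitian := (isHermitian_fromBlocks_iff.mp hM.1).2.1
  have hY : (p * X * p).IsHermitian := by
    simpa only [hp1] using isHermitian_conjTranspose_mul_mul p hX
  have hp : IsStarProjection p := ⟨hp2, hp1⟩
  open scoped MatrixOrder in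
  exact le_iff.mp <| le_geo_of_mul_inv_mul_le hA hY <|
    hp.mul_mul_mul_le_of_commute hcomm (mul_inv_mul_le_of_posSemidef_fromBlocks hA hM)

theorem schur_projection_bound {n : Type*} [Fintype n] [DecidableEq n]
    (A B X p : Matrix n n ℂ) (hA : A.PosDef) (hB : B.PosSemidef)
    (hX : X.PosSemidef)
    (hM : (Matrix.fromBlocks A X X B).PosSemidef)
    (hp1 : pᴴ = p) (hp2 : p * p = p) (hcomm : p * X = X * p) :
    (msqrt A * msqrt (pinv (msqrt A) * (p * B * p) * pinv (msqrt A)) * msqrt A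
      - p * X * p).PosSemidef :=
  schur_projection_bound_general A B X p hA hM hp1 hp2 hcomm
end
end
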